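/- Let M be a matroid on a finite ground set E with rank function rk, and let X and Y be distinct circuits of M. Then the following are equivalent: (1) X and Y form a modular pair, i.e. rk(X ∩ Y) + rk(X ∪ Y) = rk X + rk Y; (2) rk(X ∪ Y) = |X ∪ Y| − 2; (3) there exist a basis B of M and elements x ∈ X, y ∈ Y such that X = C_B(x) and Y = C_B(y), the fundamental circuits of x and y with respect to B; (4) for all distinct circuits U, V of M with U ∪ V ⊆ X ∪ Y, one has U ∪ V = X ∪ Y. -/

import Mathlib

open Set

/-- The rank of a set `S` in a matroid `M`: the largest cardinality of an independent
subset of `S`. -/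
noncomputable def Matroid.rk' {α : Type*} (M : Matroid α) (S : Set α) : ℕ :=
  sSup (Set.ncard '' {I : Set α | M.Indep I ∧ I ⊆ S})

/-- A circuit of `M`: a minimal dependent set, i.e. a dependent set all of whose proper
subsets are independent. -/
def Matroid.IsCircuit' {α : Type*} (M : Matroid α) (C : Set α) : Prop :=
  M.Dep C ∧ ∀ D : Set α, D ⊂ C → M.Indep D

/-- `S` and `T` form a modular pair in `M`: `rk(S ∩ T) + rk(S ∪ T) = rk S + rk T`. -/
def Matroid.ModularPairSets {α : Type*} (M : Matroid α) (S T : Set α) : Prop :=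
  M.rk' (S ∩ T) + M.rk' (S ∪ T) = M.rk' S + M.rk' T

/-- A modular ideal of `M`: a nonempty downward-closed family of subsets containing `{e}`
for every non-loop `e` and closed under unions of modular pairs. -/
def Matroid.ModularIdeal {α : Type*} (M : Matroid α) (I : Set (Set α)) : Prop :=
  I.Nonempty ∧ (∀ A B : Set α, A ⊆ B → B ∈ I → A ∈ I) ∧
    (∀ e : α, M.Indep {e} → {e} ∈ I) ∧
    (∀ A B : Set α, A ∈ I → B ∈ I → M.ModularPairSets A B → A ∪ B ∈ I)

/-- A linear class of circuits of `M`: a set `L` of circuits such that whenever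
`X, Y ∈ L` form a modular pair, every circuit `Z ⊆ X ∪ Y` belongs to `L`. -/
def Matroid.LinearClass {α : Type*} (M : Matroid α) (L : Set (Set α)) : Prop :=
  (∀ C ∈ L, M.IsCircuit' C) ∧
    ∀ X ∈ L, ∀ Y ∈ L, M.ModularPairSets X Y →
      ∀ Z : Set α, M.IsCircuit' Z → Z ⊆ X ∪ Y → Z ∈ L

/-! For distinct circuits `X`, `Y` the set `X ∩ Y` is independent and each circuit has rank one
less than its size, so `rk (X ∩ Y) + |X ∪ Y| = rk X + rk Y + 2`. This identity turns (1) into (2)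
and, with submodularity, shows that the nullity `|S| - rk S` of the union of two distinct circuits
is at least `2`. Adding to `S` a circuit not contained in `S` raises the nullity, so a union `U ∪ V`
properly inside `X ∪ Y` would give `X ∪ Y` nullity at least `3`: this is (2) → (4). Under (4),
deleting `x ∈ X \ Y` and `y ∈ Y \ X` from `X ∪ Y` leaves an independent set, since a circuit `Z`
inside it would satisfy `Z ∪ X = X ∪ Y` while missing `y`; any basis containing it makes `X` and
`Y` fundamental circuits, and conversely such a basis witnesses `rk (X ∪ Y) ≥ |X ∪ Y| - 2`. -/

namespace Matroid

variable {α : Type*} {M : Matroid α} {S T C I X Y : Set α} {x y z : α}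

lemma isCircuit'_iff : M.IsCircuit' C ↔ M.IsCircuit C :=
  isCircuit_iff_forall_ssubset.symm

lemma IsRkFinite.cast_rk' (hS : M.IsRkFinite S) : (M.rk' S : ℕ∞) = M.eRk S := by
  obtain ⟨I, hI, hIfin⟩ := hS.exists_finite_isBasis'
  have hmax : IsGreatest (ncard '' {J | M.Indep J ∧ J ⊆ S}) I.ncard := by
    refine ⟨⟨I, ⟨hI.indep, hI.subset⟩, rfl⟩, ?_⟩
    rintro _ ⟨J, ⟨hJ, hJS⟩, rfl⟩
    have hJI : J.encard ≤ I.encard := hI.eRk_eq_encard ▸ hJ.encard_le_eRk_of_subset hJS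
    have hJfin : J.Finite := finite_of_encard_le_coe (hJI.trans_eq hIfin.cast_ncard_eq.symm)
    exact_mod_cast (hJfin.cast_ncard_eq.trans_le hJI).trans_eq hIfin.cast_ncard_eq.symm
  rw [rk', hmax.csSup_eq, hIfin.cast_ncard_eq, hI.eRk_eq_encard]

section Finite

variable [Finite α]

lemma cast_rk' (M : Matroid α) (S : Set α) : (M.rk' S : ℕ∞) = M.eRk S :=
  (M.isRkFinite_of_finite S.toFinite).cast_rk'

lemma rk'_inter_add_rk'_union_le (M : Matroid α) (S T : Set α) :
    M.rk' (S ∩ T) + M.rk' (S ∪ T) ≤ M.rk' S + M.rk' T := by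
  have := M.eRk_inter_add_eRk_union_le S T
  simp only [← cast_rk'] at this
  exact_mod_cast this

lemma rk'_le_rk'_add_ncard_sdiff (M : Matroid α) (hST : S ⊆ T) :
    M.rk' T ≤ M.rk' S + (T \ S).ncard := by
  have := M.eRk_union_le_eRk_add_encard S (T \ S)
  rw [union_sdiff_cancel hST, ← cast_rk', ← cast_rk', ← (T \ S).toFinite.cast_ncard_eq] at this
  exact_mod_cast this

lemma Indep.ncard_le_rk' (hI : M.Indep I) (hIS : I ⊆ S) : I.ncard ≤ M.rk' S := by
  have := hI.encard_le_eRk_of_subset hIS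
  rw [← cast_rk', ← I.toFinite.cast_ncard_eq] at this
  exact_mod_cast this

lemma Indep.rk'_eq_ncard (hI : M.Indep I) : M.rk' I = I.ncard := by
  have := hI.eRk_eq_encard
  rw [← cast_rk', ← I.toFinite.cast_ncard_eq] at this
  exact_mod_cast this

lemma IsCircuit.rk'_add_one_eq (hC : M.IsCircuit C) : M.rk' C + 1 = C.ncard := by
  have := hC.eRk_add_one_eq
  rw [← cast_rk', ← C.toFinite.cast_ncard_eq] at this
  exact_mod_cast this

lemma IsCircuit.rk'_union_add_one_le (hC : M.IsCircuit C) (hzC : z ∈ C) (hzS : z ∉ S) :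
    M.rk' (S ∪ C) + 1 ≤ M.rk' S + (C \ S).ncard := by
  have hrk : M.rk' (S ∪ C) = M.rk' (S ∪ (C \ {z})) := by
    have := M.eRk_union_closure_right_eq S (C \ {z})
    rw [hC.closure_sdiff_singleton_eq, eRk_union_closure_right_eq, ← cast_rk', ← cast_rk'] at this
    exact_mod_cast this
  have hle := M.rk'_le_rk'_add_ncard_sdiff (subset_union_left (s := S) (t := C \ {z}))
  have hsd : (S ∪ C \ {z}) \ S = (C \ S) \ {z} := by
    ext; simp only [mem_sdiff, mem_union, mem_singleton_iff]; tauto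
  rw [hsd] at hle
  have hcard := ncard_sdiff_singleton_add_one (s := C \ S) ⟨hzC, hzS⟩
  omega

lemma IsCircuit.rk'_add_succ_le_of_mem_sdiff {k : ℕ} (hC : M.IsCircuit C) (hST : S ⊆ T)
    (hCT : C ⊆ T) (hzC : z ∈ C) (hzS : z ∉ S) (hS : M.rk' S + k ≤ S.ncard) :
    M.rk' T + (k + 1) ≤ T.ncard := by
  have hcirc := hC.rk'_union_add_one_le hzC hzS
  have hT := M.rk'_le_rk'_add_ncard_sdiff (union_subset hST hCT)
  have hTcard := ncard_sdiff_add_ncard_of_subset (union_subset hST hCT)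
  have hSC : (S ∪ C).ncard = S.ncard + (C \ S).ncard := by
    rw [← union_sdiff_self, ncard_union_eq disjoint_sdiff_right]
  omega

lemma IsCircuit.rk'_inter_add_ncard_union (hX : M.IsCircuit X) (hY : M.IsCircuit Y)
    (hXY : X ≠ Y) : M.rk' (X ∩ Y) + (X ∪ Y).ncard = M.rk' X + M.rk' Y + 2 := by
  have hXY' : X ∩ Y ⊂ X :=
    inter_subset_left.ssubset_of_ne fun h ↦ hXY (hX.eq_of_subset_isCircuit hY (inter_eq_left.1 h))
  have hinter := (hX.ssubset_indep hXY').rk'_eq_ncard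
  have hrkX := hX.rk'_add_one_eq
  have hrkY := hY.rk'_add_one_eq
  have hcard := ncard_inter_add_ncard_union X Y
  omega

lemma IsCircuit.rk'_union_add_two_le (hX : M.IsCircuit X) (hY : M.IsCircuit Y) (hXY : X ≠ Y) :
    M.rk' (X ∪ Y) + 2 ≤ (X ∪ Y).ncard := by
  have hrk := hX.rk'_inter_add_ncard_union hY hXY
  have hsub := M.rk'_inter_add_rk'_union_le X Y
  omega

lemma IsBase.ncard_union_le_rk'_add_two {B : Set α} (hB : M.IsBase B) (hXB : X ⊆ insert x B)
    (hYB : Y ⊆ insert y B) : (X ∪ Y).ncard ≤ M.rk' (X ∪ Y) + 2 := by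
  have hsub : (X ∪ Y) \ {x, y} ⊆ B := by
    rintro e ⟨heX | heY, hexy⟩
    · exact (hXB heX).resolve_left fun h ↦ hexy (.inl h)
    · exact (hYB heY).resolve_left fun h ↦ hexy (.inr h)
  have hrk := (hB.indep.subset hsub).ncard_le_rk' (sdiff_subset (t := {x, y}))
  have hpair : ({x, y} : Set α).ncard ≤ 2 := (ncard_insert_le x {y}).trans_eq (by simp)
  have hcard := ncard_le_ncard_sdiff_add_ncard (X ∪ Y) {x, y}
  omega

end Finite

lemma IsCircuit.indep_union_sdiff_pair (hX : M.IsCircuit X) (hY : M.IsCircuit Y) (hxX : x ∈ X)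
    (hyY : y ∈ Y) (hyX : y ∉ X)
    (h : ∀ U, M.IsCircuit U → U ≠ X → U ∪ X ⊆ X ∪ Y → U ∪ X = X ∪ Y) :
    M.Indep ((X ∪ Y) \ {x, y}) := by
  rw [indep_iff_forall_subset_not_isCircuit (sdiff_subset.trans
    (union_subset hX.subset_ground hY.subset_ground))]
  intro Z hZ hZc
  have hxZ : x ∉ Z := fun hx ↦ (hZ hx).2 (.inl rfl)
  have hZX :=
    h Z hZc (fun h ↦ hxZ (h ▸ hxX)) (union_subset (hZ.trans sdiff_subset) subset_union_left)
  have hy : y ∈ Z ∪ X := hZX ▸ .inr hyY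
  exact hy.elim (fun hyZ ↦ (hZ hyZ).2 (.inr rfl)) hyX

lemma Indep.exists_isBase_subset_insert (hI : M.Indep ((X ∪ Y) \ {x, y})) (hxY : x ∉ Y)
    (hyX : y ∉ X) : ∃ B, M.IsBase B ∧ X ⊆ insert x B ∧ Y ⊆ insert y B := by
  obtain ⟨B, hB, hIB⟩ := hI.exists_isBase_superset
  refine ⟨B, hB, fun e he ↦ ?_, fun e he ↦ ?_⟩
  · obtain rfl | hex := eq_or_ne e x
    · exact mem_insert e B
    · exact .inr (hIB ⟨.inl he, by rintro (rfl | rfl) <;> contradiction⟩)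
  · obtain rfl | hey := eq_or_ne e y
    · exact mem_insert e B
    · exact .inr (hIB ⟨.inr he, by rintro (rfl | rfl) <;> contradiction⟩)

end Matroid

theorem modularPair_circuits_tfae_general
    {α : Type*} [Fintype α] (M : Matroid α)
    (X Y : Set α) (hX : M.IsCircuit' X) (hY : M.IsCircuit' Y) (hXY : X ≠ Y) :
    List.TFAE
      [M.rk' (X ∩ Y) + M.rk' (X ∪ Y) = M.rk' X + M.rk' Y,
       M.rk' (X ∪ Y) = (X ∪ Y).ncard - 2,
       ∃ B : Set α, M.IsBase B ∧ ∃ x ∈ X, ∃ y ∈ Y, X ⊆ insert x B ∧ Y ⊆ insert y B,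
       ∀ U V : Set α, M.IsCircuit' U → M.IsCircuit' V → U ≠ V →
         U ∪ V ⊆ X ∪ Y → U ∪ V = X ∪ Y] := by
  rw [Matroid.isCircuit'_iff] at hX hY
  have hrk := hX.rk'_inter_add_ncard_union hY hXY
  have hsub := M.rk'_inter_add_rk'_union_le X Y
  tfae_have 1 ↔ 2 := by omega
  tfae_have 2 → 4 := by
    intro h U V hU hV hUV hUVXY
    rw [Matroid.isCircuit'_iff] at hU hV
    by_contra hne
    obtain ⟨z, hz, hzUV⟩ := exists_of_ssubset (hUVXY.ssubset_of_ne hne)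
    obtain ⟨C, hC, hCXY, hzC⟩ : ∃ C, M.IsCircuit C ∧ C ⊆ X ∪ Y ∧ z ∈ C :=
      hz.elim (⟨X, hX, subset_union_left, ·⟩) (⟨Y, hY, subset_union_right, ·⟩)
    have hrkXY := hC.rk'_add_succ_le_of_mem_sdiff hUVXY hCXY hzC hzUV
      (hU.rk'_union_add_two_le hV hUV)
    omega
  tfae_have 4 → 3 := by
    intro h
    obtain ⟨x, hxX, hxY⟩ : (X \ Y).Nonempty :=
      sdiff_nonempty.2 fun h ↦ hXY (hX.eq_of_subset_isCircuit hY h)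
    obtain ⟨y, hyY, hyX⟩ : (Y \ X).Nonempty :=
      sdiff_nonempty.2 fun h ↦ hXY (hY.eq_of_subset_isCircuit hX h).symm
    have hI := hX.indep_union_sdiff_pair hY hxX hyY hyX fun U hU hUX ↦
      h U X (Matroid.isCircuit'_iff.2 hU) (Matroid.isCircuit'_iff.2 hX) hUX
    obtain ⟨B, hB, hXB, hYB⟩ := hI.exists_isBase_subset_insert hxY hyX
    exact ⟨B, hB, x, hxX, y, hyY, hXB, hYB⟩
  tfae_have 3 → 2 := by
    rintro ⟨B, hB, x, -, y, -, hXB, hYB⟩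
    have hrkXY := hB.ncard_union_le_rk'_add_two hXB hYB
    omega
  tfae_finish

/-- Equivalent descriptions of modular pairs of distinct circuits `X`, `Y`:
(1) `X, Y` form a modular pair; (2) `rk(X ∪ Y) = |X ∪ Y| − 2`; (3) `X` and `Y` are
fundamental circuits `C_B(x)`, `C_B(y)` with respect to a common basis `B` of `M`;
(4) no union of two distinct circuits is properly contained in `X ∪ Y`. -/
theorem modularPair_circuits_tfae
    {α : Type*} [Fintype α] (M : Matroid α) (hE : M.E = Set.univ)
    (X Y : Set α) (hX : M.IsCircuit' X) (hY : M.IsCircuit' Y) (hXY : X ≠ Y) :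
    List.TFAE
      [M.rk' (X ∩ Y) + M.rk' (X ∪ Y) = M.rk' X + M.rk' Y,
       M.rk' (X ∪ Y) = (X ∪ Y).ncard - 2,
       ∃ B : Set α, M.IsBase B ∧ ∃ x ∈ X, ∃ y ∈ Y, X ⊆ insert x B ∧ Y ⊆ insert y B,
       ∀ U V : Set α, M.IsCircuit' U → M.IsCircuit' V → U ≠ V →
         U ∪ V ⊆ X ∪ Y → U ∪ V = X ∪ Y] :=
  modularPair_circuits_tfae_general M X Y hX hY hXY
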